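/- Let R = O_S ⊕ R⁰ be a locally free sheaf of algebras on a reduced scheme S such that [R, R] ⊆ R⁰, and suppose for every geometric point s ∈ S the fiber R_s is isomorphic to the even Clifford algebra of a nonzero quadratic form on a 3-dimensional space, compatibly with the decomposition. Then the map q_R : det(R⁰) → R⁰ ⊗ R⁰ induced by the commutator Λ²R⁰ → R⁰ (via det(R⁰) ⊗ (R⁰)^∨ ≅ Λ²R⁰) is symmetric, i.e., factors through Sym²(R⁰) ⊂ R⁰ ⊗ R⁰. -/

import Mathlib

/-!
Let `b` be a basis of `R⁰` and `C k l` the coordinates of `[b (k+1), b (k+2)]`. The cyclic sum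
`x ∧ [y,z] + y ∧ [z,x] + z ∧ [x,y]` is alternating and trilinear, so it vanishes as soon as it
vanishes at `(b 0, b 1, b 2)`, where it equals `∑_{k<l} (C k l - C l k) b k ∧ b l`: the claim is
that `C` is symmetric. Over a field, pairing the cyclic sum with `g t ∧ g s` for a dual basis `g`
shows that symmetry of `C` does not depend on the basis. In a geometric fibre the Clifford basis has
diagonal structure constants, `[w (k+1), w (k+2)] = 2 a k • w k`, so the images of `C` in every
geometric fibre are symmetric, which suffices as `R₀` is reduced.
-/

open scoped TensorProduct

section CyclicForm

variable {R N P : Type*} [CommRing R] [AddCommGroup N] [Module R N] [AddCommGroup P] [Module R P]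

def cyclicForm (β : N →ₗ[R] N →ₗ[R] N) (hβ : β.IsAlt) (φ : N →ₗ[R] N →ₗ[R] P) :
    N [⋀^Fin 3]→ₗ[R] P where
  toFun x := φ (x 0) (β (x 1) (x 2)) + φ (x 1) (β (x 2) (x 0)) + φ (x 2) (β (x 0) (x 1))
  map_update_add' := by
    -- the field quantifies over any `DecidableEq` instance; `Function.update` only reduces for
    -- the canonical one
    intro inst x i y z
    obtain rfl := Subsingleton.elim inst (instDecidableEqFin 3)
    fin_cases i <;>
      simp only [Fin.zero_eta, Fin.mk_one, Fin.reduceFinMk, Fin.isValue, Fin.reduceEq, ne_eq,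
        one_ne_zero, zero_ne_one, not_false_eq_true, Function.update_self, Function.update_of_ne,
        map_add, LinearMap.add_apply] <;>
      abel
  map_update_smul' := by
    intro inst x i c y
    obtain rfl := Subsingleton.elim inst (instDecidableEqFin 3)
    fin_cases i <;> simp
  map_eq_zero_of_eq' x i j hij hne := by
    fin_cases i <;> fin_cases j <;> first
      | exact absurd rfl hne
      | (simp only [Fin.zero_eta, Fin.mk_one, Fin.reduceFinMk] at hij
         simp only [hij, hβ.self_eq_zero, map_zero, add_zero, zero_add]
         rw [← hβ.neg]
         simp)

variable {β : N →ₗ[R] N →ₗ[R] N} {hβ : β.IsAlt} {φ : N →ₗ[R] N →ₗ[R] P}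

@[simp]
lemma cyclicForm_apply (x : Fin 3 → N) :
    cyclicForm β hβ φ x =
      φ (x 0) (β (x 1) (x 2)) + φ (x 1) (β (x 2) (x 0)) + φ (x 2) (β (x 0) (x 1)) :=
  rfl

lemma cyclicForm_apply_eq_sum {b : Fin 3 → N} {C : Fin 3 → Fin 3 → R}
    (hC : ∀ k, β (b (k + 1)) (b (k + 2)) = ∑ l, C k l • b l) :
    cyclicForm β hβ φ b = ∑ k, ∑ l, C k l • φ (b k) (b l) := by
  have h0 := hC 0
  have h1 := hC 1
  have h2 := hC 2
  simp only [Fin.isValue, Fin.reduceAdd] at h0 h1 h2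
  simp [h0, h1, h2, Fin.sum_univ_three]

lemma cyclicForm_apply_eq_zero_of_symm (hφ : φ.IsAlt) {b : Fin 3 → N} {C : Fin 3 → Fin 3 → R}
    (hC : ∀ k, β (b (k + 1)) (b (k + 2)) = ∑ l, C k l • b l) (hCsymm : ∀ k l, C k l = C l k) :
    cyclicForm β hβ φ b = 0 := by
  rw [cyclicForm_apply_eq_sum hC]
  simp only [Fin.sum_univ_three, hφ.self_eq_zero, smul_zero, add_zero, zero_add,
    ← hφ.neg (b 0) (b 1), ← hφ.neg (b 0) (b 2), ← hφ.neg (b 1) (b 2),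
    hCsymm 1 0, hCsymm 2 0, hCsymm 2 1]
  module

end CyclicForm

lemma AlternatingMap.map_eq_zero_of_forall_mem_span {R N P ι : Type*} [CommRing R] [AddCommGroup N]
    [Module R N] [AddCommGroup P] [Module R P] [Fintype ι] [DecidableEq ι]
    (f : N [⋀^ι]→ₗ[R] P) {b x : ι → N} (hb : f b = 0)
    (hx : ∀ i, x i ∈ Submodule.span R (Set.range b)) : f x = 0 := by
  choose c hc using fun i => (Submodule.mem_span_range_iff_exists_fun R).1 (hx i)
  obtain rfl : x = fun i => ∑ j, c i j • b j := funext fun i => (hc i).symm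
  rw [← f.coe_multilinearMap, MultilinearMap.map_sum]
  refine Finset.sum_eq_zero fun r _ => ?_
  rw [f.coe_multilinearMap, f.map_smul_univ (fun i => c i (r i)) (fun i => b (r i))]
  by_cases hr : r.Injective
  · rw [show (fun i => b (r i)) = b ∘ Equiv.ofBijective r hr.bijective_of_finite from rfl,
      f.map_perm, hb, smul_zero, smul_zero]
  · rw [f.map_eq_zero_of_not_injective (fun i => b (r i)) fun h => hr h.of_comp, smul_zero]

section Commutator

variable (R A : Type*) [CommRing R] [Ring A] [Algebra R A]

def LinearMap.commutator : A →ₗ[R] A →ₗ[R] A :=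
  LinearMap.mul R A - (LinearMap.mul R A).flip

@[simp]
lemma LinearMap.commutator_apply (x y : A) : LinearMap.commutator R A x y = x * y - y * x :=
  rfl

lemma LinearMap.isAlt_commutator : (LinearMap.commutator R A).IsAlt :=
  fun _ => sub_self _

variable {R A} (M : Submodule R A) (hM : ∀ x ∈ M, ∀ y ∈ M, x * y - y * x ∈ M)

noncomputable def LinearMap.commutatorOn : M →ₗ[R] M →ₗ[R] M :=
  ((LinearMap.commutator R A).compl₁₂ M.subtype M.subtype).codRestrict₂ M.subtype
    M.injective_subtype fun x y => by simpa using hM x x.2 y y.2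

lemma LinearMap.commutatorOn_apply (x y : M) :
    LinearMap.commutatorOn M hM x y = ⟨x * y - y * x, hM x x.2 y y.2⟩ :=
  Subtype.ext ((LinearMap.codRestrict₂_apply _ M.subtype _ _ x y).trans (by simp))

lemma LinearMap.isAlt_commutatorOn : (LinearMap.commutatorOn M hM).IsAlt :=
  fun x => by simp [LinearMap.commutatorOn_apply]

end Commutator

section Field

variable {K N : Type*} [Field K] [AddCommGroup N] [Module K N]

lemma LinearIndependent.exists_dual_apply_eq_ite {ι : Type*} [DecidableEq ι] {v : ι → N}
    (hv : LinearIndependent K v) :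
    ∃ g : ι → Module.Dual K N, ∀ t k, g t (v k) = if k = t then 1 else 0 := by
  choose g hg using fun t => LinearMap.exists_extend (Finsupp.lapply t ∘ₗ hv.repr)
  refine ⟨g, fun t k => ?_⟩
  have hmem : v k ∈ Submodule.span K (Set.range v) := Submodule.subset_span ⟨k, rfl⟩
  have := congr($(hg t) ⟨v k, hmem⟩)
  simp only [LinearMap.coe_comp, Function.comp_apply, Submodule.coe_subtype] at this
  rw [this, hv.repr_eq_single k _ rfl, Finsupp.lapply_apply, Finsupp.single_apply]

lemma LinearIndependent.of_span_eq {ι : Type*} [Fintype ι] {v w : ι → N}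
    (hw : LinearIndependent K w)
    (h : Submodule.span K (Set.range v) = Submodule.span K (Set.range w)) :
    LinearIndependent K v := by
  rw [linearIndependent_iff_card_eq_finrank_span] at hw ⊢
  rwa [Set.finrank, h]

variable {β : N →ₗ[K] N →ₗ[K] N}

lemma structConst_symm_of_forall_cyclicForm_eq_zero (hβ : β.IsAlt) {v : Fin 3 → N}
    (hv : LinearIndependent K v)
    {C : Fin 3 → Fin 3 → K} (hC : ∀ k, β (v (k + 1)) (v (k + 2)) = ∑ l, C k l • v l)
    (h : ∀ φ : N →ₗ[K] N →ₗ[K] K, φ.IsAlt → cyclicForm β hβ φ v = 0) (t s : Fin 3) :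
    C t s = C s t := by
  obtain ⟨g, hg⟩ := hv.exists_dual_apply_eq_ite
  let φ := (LinearMap.mul K K).compl₁₂ (g t) (g s) - (LinearMap.mul K K).compl₁₂ (g s) (g t)
  have hφ : φ.IsAlt := fun x => by simp [φ, mul_comm]
  have := h φ hφ
  rw [cyclicForm_apply_eq_sum hC] at this
  simpa [φ, hg, mul_sub, Finset.sum_sub_distrib, mul_ite, sub_eq_zero] using this

lemma structConst_symm_of_mem_span_diagonal (hβ : β.IsAlt) {w : Fin 3 → N} {c : Fin 3 → K}
    (hw : ∀ k, β (w (k + 1)) (w (k + 2)) = c k • w k) {v : Fin 3 → N}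
    (hv : LinearIndependent K v) (hvw : ∀ k, v k ∈ Submodule.span K (Set.range w))
    {C : Fin 3 → Fin 3 → K} (hC : ∀ k, β (v (k + 1)) (v (k + 2)) = ∑ l, C k l • v l) (i j : Fin 3) :
    C i j = C j i := by
  refine structConst_symm_of_forall_cyclicForm_eq_zero hβ hv hC (fun φ hφ => ?_) i j
  refine (cyclicForm β hβ φ).map_eq_zero_of_forall_mem_span ?_ hvw
  have h0 := hw 0
  have h1 := hw 1
  have h2 := hw 2
  simp only [Fin.isValue, Fin.reduceAdd] at h0 h1 h2
  simp [h0, h1, h2, hφ.self_eq_zero]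

end Field

lemma IsReduced.eq_of_forall_algebraMap_eq.{u} {R : Type u} [CommRing R] [IsReduced R] {r s : R}
    (h : ∀ (K : Type u) [Field K] [IsAlgClosed K] [Algebra R K],
      algebraMap R K r = algebraMap R K s) :
    r = s := by
  rw [← sub_eq_zero]
  refine (nilpotent_iff_mem_prime.2 fun p hp => ?_).eq_zero
  have hK := h (AlgebraicClosure (FractionRing (R ⧸ p)))
  rwa [← sub_eq_zero, ← map_sub, IsScalarTower.algebraMap_apply R (R ⧸ p),
    IsScalarTower.algebraMap_apply (R ⧸ p) (FractionRing (R ⧸ p)), map_eq_zero,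
    IsFractionRing.to_map_eq_zero_iff, Ideal.Quotient.algebraMap_eq,
    Ideal.Quotient.eq_zero_iff_mem] at hK

lemma algebraMap_structConst_symm {R₀ A K : Type*} [CommRing R₀] [Ring A] [Algebra R₀ A] [Field K]
    [Algebra R₀ K] {M : Submodule R₀ A} (b : Module.Basis (Fin 3) R₀ M) {C : Fin 3 → Fin 3 → R₀}
    (hC : ∀ k, (b (k + 1) : A) * b (k + 2) - b (k + 2) * b (k + 1) = ∑ l, C k l • (b l : A))
    {w : Fin 3 → K ⊗[R₀] A} (hw : LinearIndependent K w)
    (hwM : Submodule.span K (Set.range w) =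
      Submodule.span K {x | ∃ m ∈ M, x = (1 : K) ⊗ₜ[R₀] m})
    {c : Fin 3 → K} (hwc : ∀ k, w (k + 1) * w (k + 2) - w (k + 2) * w (k + 1) = c k • w k)
    (i j : Fin 3) :
    algebraMap R₀ K (C i j) = algebraMap R₀ K (C j i) := by
  set v : Fin 3 → K ⊗[R₀] A := fun k => 1 ⊗ₜ (b k : A)
  have htmul : ∀ f : Fin 3 → R₀,
      (1 : K) ⊗ₜ[R₀] (∑ l, f l • (b l : A)) = ∑ l, algebraMap R₀ K (f l) • v l := by
    intro f
    simp [v, TensorProduct.tmul_sum, TensorProduct.tmul_smul, algebraMap_smul]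
  have hspan : Submodule.span K (Set.range v) = Submodule.span K (Set.range w) := by
    rw [hwM]
    apply le_antisymm <;> rw [Submodule.span_le]
    · rintro _ ⟨k, rfl⟩
      exact Submodule.subset_span ⟨_, (b k).2, rfl⟩
    · rintro _ ⟨m, hm, rfl⟩
      have hm' : m = ∑ l, b.repr ⟨m, hm⟩ l • (b l : A) := by
        have := congrArg Subtype.val (b.sum_repr ⟨m, hm⟩)
        push_cast at this
        exact this.symm
      rw [hm', htmul]
      exact Submodule.sum_mem _ fun l _ => Submodule.smul_mem _ _ (Submodule.subset_span ⟨l, rfl⟩)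
  refine structConst_symm_of_mem_span_diagonal (LinearMap.isAlt_commutator K _) (by simpa using hwc)
    (hw.of_span_eq hspan) (fun k => hspan ▸ Submodule.subset_span (Set.mem_range_self k))
    (C := fun k l => algebraMap R₀ K (C k l)) (fun k => ?_) i j
  simp [v, ← TensorProduct.tmul_sub, hC, htmul]

theorem stmt_11.{u} (R₀ : Type u) [CommRing R₀] [IsReduced R₀]
    (A : Type u) [Ring A] [Algebra R₀ A]
    (M : Submodule R₀ A)
    -- A = O_S ⊕ R⁰ : the unit line is a complement of M
    (hdec : IsCompl (1 : Submodule R₀ A) M)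
    -- A is locally free (as is M, of rank 3)
    [Module.Free R₀ A] [Module.Finite R₀ A]
    [Module.Free R₀ ↥M] [Module.Finite R₀ ↥M]
    (hrk : Module.rank R₀ ↥M = 3)
    -- [R, R] ⊆ R⁰
    (hcomm : ∀ x y : A, x * y - y * x ∈ M)
    -- pointwise Clifford condition at every geometric point
    (hpt : ∀ (K : Type u) [Field K] [IsAlgClosed K] [Algebra R₀ K],
      ∃ a : Fin 3 → K, (∃ i, a i ≠ 0) ∧
      ∃ w : Fin 3 → K ⊗[R₀] A,
        (∀ i, w i ∈ Submodule.span K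
          {x : K ⊗[R₀] A | ∃ m ∈ M, x = (1 : K) ⊗ₜ[R₀] m}) ∧
        LinearIndependent K w ∧
        Submodule.span K (Set.range w) =
          Submodule.span K {x : K ⊗[R₀] A | ∃ m ∈ M, x = (1 : K) ⊗ₜ[R₀] m} ∧
        w 0 * w 1 = a 2 • w 2 ∧ w 1 * w 0 = -(a 2 • w 2) ∧
        w 1 * w 2 = a 0 • w 0 ∧ w 2 * w 1 = -(a 0 • w 0) ∧
        w 2 * w 0 = a 1 • w 1 ∧ w 0 * w 2 = -(a 1 • w 1) ∧
        w 0 * w 0 = algebraMap K (K ⊗[R₀] A) (-(2 * a 1 * a 2)) ∧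
        w 1 * w 1 = algebraMap K (K ⊗[R₀] A) (-(2 * a 0 * a 2)) ∧
        w 2 * w 2 = algebraMap K (K ⊗[R₀] A) (-(2 * a 0 * a 1))) :
    -- conclusion: q_R is symmetric, i.e. its image in Λ²(R⁰) vanishes
    ∀ x y z : ↥M,
      ExteriorAlgebra.ι R₀ x * ExteriorAlgebra.ι R₀
          (⟨(y : A) * z - (z : A) * y, hcomm y z⟩ : ↥M)
        + ExteriorAlgebra.ι R₀ y * ExteriorAlgebra.ι R₀
          (⟨(z : A) * x - (x : A) * z, hcomm z x⟩ : ↥M)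
        + ExteriorAlgebra.ι R₀ z * ExteriorAlgebra.ι R₀
          (⟨(x : A) * y - (y : A) * x, hcomm x y⟩ : ↥M)
        = 0 := by
  rcases subsingleton_or_nontrivial R₀ with hR₀ | hR₀
  · have := Module.subsingleton R₀ (ExteriorAlgebra R₀ M)
    exact fun _ _ _ => Subsingleton.elim _ _
  let b := Module.finBasisOfFinrankEq R₀ M (Module.finrank_eq_of_rank_eq hrk)
  have hM : ∀ x ∈ M, ∀ y ∈ M, x * y - y * x ∈ M := fun x _ y _ => hcomm x y
  let β := LinearMap.commutatorOn M hM
  let C k l := b.repr (β (b (k + 1)) (b (k + 2))) l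
  have hC k : β (b (k + 1)) (b (k + 2)) = ∑ l, C k l • b l := (b.sum_repr _).symm
  have hCsymm k l : C k l = C l k := IsReduced.eq_of_forall_algebraMap_eq fun K _ _ _ => by
    obtain ⟨a, -, w, -, hw, hwM, t01, t10, t12, t21, t20, t02, -⟩ := hpt K
    refine algebraMap_structConst_symm b (fun k => ?_) hw hwM (c := fun k => 2 * a k)
      (fun k => ?_) k l
    · simpa [β, LinearMap.commutatorOn_apply] using congrArg Subtype.val (hC k)
    · fin_cases k <;> simp [t01, t10, t12, t21, t20, t02, two_mul, add_smul]
  let φ := (LinearMap.mul R₀ (ExteriorAlgebra R₀ M)).compl₁₂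
    (ExteriorAlgebra.ι R₀) (ExteriorAlgebra.ι R₀)
  have hφ : φ.IsAlt := ExteriorAlgebra.ι_sq_zero
  intro x y z
  simpa [β, LinearMap.commutatorOn_apply, φ] using
    (cyclicForm β (LinearMap.isAlt_commutatorOn M hM) φ).map_eq_zero_of_forall_mem_span
    (cyclicForm_apply_eq_zero_of_symm hφ hC hCsymm) (x := ![x, y, z])
    fun i => b.span_eq ▸ Submodule.mem_top
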